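/- (Proposition 2, exact solution of the bridge ODE.) Let 0 < t ≤ s < 1, let x_1 ∈ ℝ^d, let X : [t,s] → ℝ^d be continuous (the data-prediction function τ ↦ x_θ(x_τ, τ)), and let y : [t,s] → ℝ^d be differentiable satisfying, for every τ ∈ [t,s], y'(τ) = f(τ)·y(τ) − g(τ)²·(y(τ) − ᾱ_τ x_1)/(2 α_τ² σ̄_τ²) + g(τ)²·(y(τ) − α_τ X(τ))/(2 α_τ² σ_τ²). Then y(t) = (α_t σ_t σ̄_t)/(α_s σ_s σ̄_s)·y(s) + (ᾱ_t σ_t²/σ_1²)·(1 − (σ_s σ̄_t)/(σ̄_s σ_t))·x_1 − (α_t σ_t σ̄_t/2)·∫_s^t g(τ)²/(α_τ² σ_τ³ σ̄_τ)·X(τ) dτ. -/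

import Mathlib

/-- Scaling coefficient `α_t = exp(∫_0^t f)`. -/
noncomputable def alpha (f : ℝ → ℝ) (t : ℝ) : ℝ := Real.exp (∫ τ in (0:ℝ)..t, f τ)

/-- Reverse scaling coefficient `ᾱ_t = exp(-∫_t^1 f)`. -/
noncomputable def alphaBar (f : ℝ → ℝ) (t : ℝ) : ℝ := Real.exp (-∫ τ in t..(1:ℝ), f τ)

/-- Accumulated variance `σ_t² = ∫_0^t g²/α²`. -/
noncomputable def sigmaSq (f g : ℝ → ℝ) (t : ℝ) : ℝ :=
  ∫ τ in (0:ℝ)..t, (g τ)^2 / (alpha f τ)^2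

/-- Reverse accumulated variance `σ̄_t² = ∫_t^1 g²/α²`. -/
noncomputable def sigmaBarSq (f g : ℝ → ℝ) (t : ℝ) : ℝ :=
  ∫ τ in t..(1:ℝ), (g τ)^2 / (alpha f τ)^2

/-- Accumulated standard deviation `σ_t`. -/
noncomputable def sigma' (f g : ℝ → ℝ) (t : ℝ) : ℝ := Real.sqrt (sigmaSq f g t)

/-- Reverse accumulated standard deviation `σ̄_t`. -/
noncomputable def sigmaBar (f g : ℝ → ℝ) (t : ℝ) : ℝ := Real.sqrt (sigmaBarSq f g t)

/-!
The integrating factor `μ = α σ σ̄` satisfies `μ'/μ = f + g²/(2α²σ²) − g²/(2α²σ̄²)`, which is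
exactly the coefficient of `y` in the bridge ODE, so `(y/μ)'` only involves `x₁` and `X` and
integrating it from `s` to `t` gives the formula. The `x₁`-integrand `g² ᾱ / (2 α² σ̄² μ)` is
`(σ/σ̄)' / (α₁ σ₁²)` because `σ² + σ̄² = σ₁²`, so that integral is explicit.
-/

open Set MeasureTheory intervalIntegral

section Calculus

variable {E : Type*} [NormedAddCommGroup E] [NormedSpace ℝ E] [CompleteSpace E]

/-- Variation of constants: `μ⁻¹ • y` has derivative `r`. -/
lemma eq_smul_add_integral_of_hasDerivAt_linear {a μ : ℝ → ℝ} {y r : ℝ → E} {s t : ℝ}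
    (hμ : ∀ τ ∈ uIcc s t, HasDerivAt μ (a τ * μ τ) τ) (hμ0 : ∀ τ ∈ uIcc s t, μ τ ≠ 0)
    (hy : ∀ τ ∈ uIcc s t, HasDerivAt y (a τ • y τ + μ τ • r τ) τ)
    (hr : IntervalIntegrable r volume s t) :
    y t = (μ t / μ s) • y s + μ t • ∫ τ in s..t, r τ := by
  have hderiv : ∀ τ ∈ uIcc s t, HasDerivAt (fun u => (μ u)⁻¹ • y u) (r τ) τ := fun τ hτ => by
    refine (((hμ τ hτ).inv (hμ0 τ hτ)).smul (hy τ hτ)).congr_deriv ?_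
    have hcancel : (μ τ)⁻¹ * a τ + -(a τ * μ τ) / μ τ ^ 2 = 0 := by
      field_simp [hμ0 τ hτ]
      ring
    rw [Pi.inv_apply, smul_add, smul_smul, smul_smul, inv_mul_cancel₀ (hμ0 τ hτ), one_smul,
      add_right_comm, ← add_smul, hcancel, zero_smul, zero_add]
  rw [integral_eq_sub_of_hasDerivAt hderiv hr, smul_sub, smul_inv_smul₀ (hμ0 t right_mem_uIcc),
    smul_smul, div_eq_mul_inv]
  abel

lemma hasDerivAt_integral_of_continuousOn_Icc {h : ℝ → E} {a b τ : ℝ}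
    (hh : ContinuousOn h (Icc a b)) (hτ : τ ∈ Ioo a b) :
    HasDerivAt (fun u => ∫ x in a..u, h x) (h τ) τ :=
  integral_hasDerivAt_right ((hh.mono (Icc_subset_Icc_right hτ.2.le)).intervalIntegrable_of_Icc
      hτ.1.le) ((hh.mono Ioo_subset_Icc_self).stronglyMeasurableAtFilter isOpen_Ioo τ hτ)
    (hh.continuousAt (Icc_mem_nhds hτ.1 hτ.2))

end Calculus

lemma alpha_pos (f : ℝ → ℝ) (t : ℝ) : 0 < alpha f t := Real.exp_pos _

section Schedule

variable {f g : ℝ → ℝ}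

lemma continuousOn_alpha (hf : ContinuousOn f (Icc 0 1)) : ContinuousOn (alpha f) (Icc 0 1) := by
  have h := continuousOn_primitive_interval (μ := volume) (a := 0) (b := 1) (f := f)
    (by simpa using hf.integrableOn_Icc)
  rw [uIcc_of_le zero_le_one] at h
  exact Real.continuous_exp.comp_continuousOn h

lemma hasDerivAt_alpha (hf : ContinuousOn f (Icc 0 1)) {τ : ℝ} (hτ : τ ∈ Ioo (0:ℝ) 1) :
    HasDerivAt (alpha f) (alpha f τ * f τ) τ :=
  (hasDerivAt_integral_of_continuousOn_Icc hf hτ).exp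

lemma alphaBar_eq_div (hf : ContinuousOn f (Icc 0 1)) {τ : ℝ} (hτ : τ ∈ Icc (0:ℝ) 1) :
    alphaBar f τ = alpha f τ / alpha f 1 := by
  rw [alphaBar, alpha, alpha, ← Real.exp_sub, ← integral_add_adjacent_intervals
    ((hf.mono (Icc_subset_Icc_right hτ.2)).intervalIntegrable_of_Icc hτ.1)
    ((hf.mono (Icc_subset_Icc_left hτ.1)).intervalIntegrable_of_Icc hτ.2)]
  ring_nf

lemma continuousOn_sq_div_sq_alpha (hf : ContinuousOn f (Icc 0 1))
    (hg : ContinuousOn g (Icc 0 1)) :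
    ContinuousOn (fun τ => g τ ^ 2 / alpha f τ ^ 2) (Icc 0 1) :=
  (hg.pow 2).div ((continuousOn_alpha hf).pow 2) fun τ _ => (pow_pos (alpha_pos f τ) 2).ne'

lemma sigmaSq_add_sigmaBarSq (hf : ContinuousOn f (Icc 0 1)) (hg : ContinuousOn g (Icc 0 1))
    {τ : ℝ} (hτ : τ ∈ Icc (0:ℝ) 1) :
    sigmaSq f g τ + sigmaBarSq f g τ = sigmaSq f g 1 := by
  have h := continuousOn_sq_div_sq_alpha hf hg
  exact integral_add_adjacent_intervals
    ((h.mono (Icc_subset_Icc_right hτ.2)).intervalIntegrable_of_Icc hτ.1)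
    ((h.mono (Icc_subset_Icc_left hτ.1)).intervalIntegrable_of_Icc hτ.2)

lemma hasDerivAt_sigmaSq (hf : ContinuousOn f (Icc 0 1)) (hg : ContinuousOn g (Icc 0 1))
    {τ : ℝ} (hτ : τ ∈ Ioo (0:ℝ) 1) :
    HasDerivAt (sigmaSq f g) (g τ ^ 2 / alpha f τ ^ 2) τ :=
  hasDerivAt_integral_of_continuousOn_Icc (continuousOn_sq_div_sq_alpha hf hg) hτ

lemma hasDerivAt_sigmaBarSq (hf : ContinuousOn f (Icc 0 1)) (hg : ContinuousOn g (Icc 0 1))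
    {τ : ℝ} (hτ : τ ∈ Ioo (0:ℝ) 1) :
    HasDerivAt (sigmaBarSq f g) (-(g τ ^ 2 / alpha f τ ^ 2)) τ := by
  refine ((hasDerivAt_sigmaSq hf hg hτ).const_sub (sigmaSq f g 1)).congr_of_eventuallyEq ?_
  filter_upwards [Icc_mem_nhds hτ.1 hτ.2] with u hu
  linarith [sigmaSq_add_sigmaBarSq hf hg hu]

lemma sigmaSq_pos (hf : ContinuousOn f (Icc 0 1)) (hg : ContinuousOn g (Icc 0 1))
    (hgpos : ∀ τ ∈ Icc (0:ℝ) 1, 0 < g τ) {τ : ℝ} (hτ : τ ∈ Ioc (0:ℝ) 1) : 0 < sigmaSq f g τ :=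
  intervalIntegral_pos_of_pos_on (((continuousOn_sq_div_sq_alpha hf hg).mono
    (Icc_subset_Icc_right hτ.2)).intervalIntegrable_of_Icc hτ.1.le)
    (fun x hx => div_pos (pow_pos (hgpos x ⟨hx.1.le, hx.2.le.trans hτ.2⟩) 2)
      (pow_pos (alpha_pos f x) 2)) hτ.1

lemma sigmaBarSq_pos (hf : ContinuousOn f (Icc 0 1)) (hg : ContinuousOn g (Icc 0 1))
    (hgpos : ∀ τ ∈ Icc (0:ℝ) 1, 0 < g τ) {τ : ℝ} (hτ : τ ∈ Ico (0:ℝ) 1) : 0 < sigmaBarSq f g τ :=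
  intervalIntegral_pos_of_pos_on (((continuousOn_sq_div_sq_alpha hf hg).mono
    (Icc_subset_Icc_left hτ.1)).intervalIntegrable_of_Icc hτ.2.le)
    (fun x hx => div_pos (pow_pos (hgpos x ⟨hτ.1.trans hx.1.le, hx.2.le⟩) 2)
      (pow_pos (alpha_pos f x) 2)) hτ.2

lemma sigma'_pos (hf : ContinuousOn f (Icc 0 1)) (hg : ContinuousOn g (Icc 0 1))
    (hgpos : ∀ τ ∈ Icc (0:ℝ) 1, 0 < g τ) {τ : ℝ} (hτ : τ ∈ Ioc (0:ℝ) 1) : 0 < sigma' f g τ :=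
  Real.sqrt_pos.2 (sigmaSq_pos hf hg hgpos hτ)

lemma sigmaBar_pos (hf : ContinuousOn f (Icc 0 1)) (hg : ContinuousOn g (Icc 0 1))
    (hgpos : ∀ τ ∈ Icc (0:ℝ) 1, 0 < g τ) {τ : ℝ} (hτ : τ ∈ Ico (0:ℝ) 1) : 0 < sigmaBar f g τ :=
  Real.sqrt_pos.2 (sigmaBarSq_pos hf hg hgpos hτ)

lemma sq_sigma' (hf : ContinuousOn f (Icc 0 1)) (hg : ContinuousOn g (Icc 0 1))
    (hgpos : ∀ τ ∈ Icc (0:ℝ) 1, 0 < g τ) {τ : ℝ} (hτ : τ ∈ Ioc (0:ℝ) 1) :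
    sigma' f g τ ^ 2 = sigmaSq f g τ :=
  Real.sq_sqrt (sigmaSq_pos hf hg hgpos hτ).le

lemma sq_sigmaBar (hf : ContinuousOn f (Icc 0 1)) (hg : ContinuousOn g (Icc 0 1))
    (hgpos : ∀ τ ∈ Icc (0:ℝ) 1, 0 < g τ) {τ : ℝ} (hτ : τ ∈ Ico (0:ℝ) 1) :
    sigmaBar f g τ ^ 2 = sigmaBarSq f g τ :=
  Real.sq_sqrt (sigmaBarSq_pos hf hg hgpos hτ).le

lemma hasDerivAt_sigma' (hf : ContinuousOn f (Icc 0 1)) (hg : ContinuousOn g (Icc 0 1))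
    (hgpos : ∀ τ ∈ Icc (0:ℝ) 1, 0 < g τ) {τ : ℝ} (hτ : τ ∈ Ioo (0:ℝ) 1) :
    HasDerivAt (sigma' f g) (g τ ^ 2 / alpha f τ ^ 2 / (2 * sigma' f g τ)) τ :=
  (hasDerivAt_sigmaSq hf hg hτ).sqrt (sigmaSq_pos hf hg hgpos (Ioo_subset_Ioc_self hτ)).ne'

lemma hasDerivAt_sigmaBar (hf : ContinuousOn f (Icc 0 1)) (hg : ContinuousOn g (Icc 0 1))
    (hgpos : ∀ τ ∈ Icc (0:ℝ) 1, 0 < g τ) {τ : ℝ} (hτ : τ ∈ Ioo (0:ℝ) 1) :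
    HasDerivAt (sigmaBar f g) (-(g τ ^ 2 / alpha f τ ^ 2) / (2 * sigmaBar f g τ)) τ :=
  (hasDerivAt_sigmaBarSq hf hg hτ).sqrt (sigmaBarSq_pos hf hg hgpos (Ioo_subset_Ico_self hτ)).ne'

lemma hasDerivAt_sigma'_div_sigmaBar (hf : ContinuousOn f (Icc 0 1))
    (hg : ContinuousOn g (Icc 0 1)) (hgpos : ∀ τ ∈ Icc (0:ℝ) 1, 0 < g τ) {τ : ℝ}
    (hτ : τ ∈ Ioo (0:ℝ) 1) :
    HasDerivAt (fun u => sigma' f g u / sigmaBar f g u)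
      (sigmaSq f g 1 / 2 * (g τ ^ 2 / (alpha f τ ^ 2 * sigma' f g τ * sigmaBar f g τ ^ 3))) τ := by
  have := sigma'_pos hf hg hgpos (Ioo_subset_Ioc_self hτ)
  have hσb := sigmaBar_pos hf hg hgpos (Ioo_subset_Ico_self hτ)
  refine ((hasDerivAt_sigma' hf hg hgpos hτ).div (hasDerivAt_sigmaBar hf hg hgpos hτ)
    hσb.ne').congr_deriv ?_
  rw [← sigmaSq_add_sigmaBarSq hf hg (Ioo_subset_Icc_self hτ),
    ← sq_sigma' hf hg hgpos (Ioo_subset_Ioc_self hτ),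
    ← sq_sigmaBar hf hg hgpos (Ioo_subset_Ico_self hτ)]
  field_simp
  ring

lemma alpha_mul_sigma'_mul_sigmaBar_pos (hf : ContinuousOn f (Icc 0 1))
    (hg : ContinuousOn g (Icc 0 1)) (hgpos : ∀ τ ∈ Icc (0:ℝ) 1, 0 < g τ) {τ : ℝ}
    (hτ : τ ∈ Ioo (0:ℝ) 1) : 0 < alpha f τ * sigma' f g τ * sigmaBar f g τ :=
  mul_pos (mul_pos (alpha_pos f τ) (sigma'_pos hf hg hgpos (Ioo_subset_Ioc_self hτ)))
    (sigmaBar_pos hf hg hgpos (Ioo_subset_Ico_self hτ))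

lemma hasDerivAt_alpha_mul_sigma'_mul_sigmaBar (hf : ContinuousOn f (Icc 0 1))
    (hg : ContinuousOn g (Icc 0 1)) (hgpos : ∀ τ ∈ Icc (0:ℝ) 1, 0 < g τ) {τ : ℝ}
    (hτ : τ ∈ Ioo (0:ℝ) 1) :
    HasDerivAt (fun u => alpha f u * sigma' f g u * sigmaBar f g u)
      ((f τ - g τ ^ 2 / (2 * alpha f τ ^ 2 * sigmaBarSq f g τ)
          + g τ ^ 2 / (2 * alpha f τ ^ 2 * sigmaSq f g τ))
        * (alpha f τ * sigma' f g τ * sigmaBar f g τ)) τ := by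
  have := sigma'_pos hf hg hgpos (Ioo_subset_Ioc_self hτ)
  have := sigmaBar_pos hf hg hgpos (Ioo_subset_Ico_self hτ)
  have := alpha_pos f τ
  refine (((hasDerivAt_alpha hf hτ).mul (hasDerivAt_sigma' hf hg hgpos hτ)).mul
    (hasDerivAt_sigmaBar hf hg hgpos hτ)).congr_deriv ?_
  rw [← sq_sigma' hf hg hgpos (Ioo_subset_Ioc_self hτ),
    ← sq_sigmaBar hf hg hgpos (Ioo_subset_Ico_self hτ), Pi.mul_apply]
  field_simp
  ring

lemma continuousOn_sq_div_alpha_sigma'_pow_sigmaBar_pow (hf : ContinuousOn f (Icc 0 1))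
    (hg : ContinuousOn g (Icc 0 1)) (hgpos : ∀ τ ∈ Icc (0:ℝ) 1, 0 < g τ) (m n : ℕ) :
    ContinuousOn (fun τ => g τ ^ 2 / (alpha f τ ^ 2 * sigma' f g τ ^ m * sigmaBar f g τ ^ n))
      (Ioo 0 1) := by
  have hα : ContinuousOn (alpha f) (Ioo 0 1) := (continuousOn_alpha hf).mono Ioo_subset_Icc_self
  have hσ : ContinuousOn (sigma' f g) (Ioo 0 1) := fun τ hτ =>
    (hasDerivAt_sigma' hf hg hgpos hτ).continuousAt.continuousWithinAt
  have hσb : ContinuousOn (sigmaBar f g) (Ioo 0 1) := fun τ hτ =>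
    (hasDerivAt_sigmaBar hf hg hgpos hτ).continuousAt.continuousWithinAt
  refine ((hg.mono Ioo_subset_Icc_self).pow 2).div (((hα.pow 2).mul (hσ.pow m)).mul (hσb.pow n))
    fun τ hτ => ?_
  have := sigma'_pos hf hg hgpos (Ioo_subset_Ioc_self hτ)
  have := sigmaBar_pos hf hg hgpos (Ioo_subset_Ico_self hτ)
  have := alpha_pos f τ
  positivity

lemma integral_sq_div_alpha_sigma'_sigmaBar_pow_three (hf : ContinuousOn f (Icc 0 1))
    (hg : ContinuousOn g (Icc 0 1)) (hgpos : ∀ τ ∈ Icc (0:ℝ) 1, 0 < g τ) {s t : ℝ}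
    (hs : s ∈ Ioo (0:ℝ) 1) (ht : t ∈ Ioo (0:ℝ) 1) :
    ∫ τ in s..t, g τ ^ 2 / (alpha f τ ^ 2 * sigma' f g τ * sigmaBar f g τ ^ 3)
      = 2 * (sigma' f g t / sigmaBar f g t - sigma' f g s / sigmaBar f g s) / sigmaSq f g 1 := by
  have hsub : uIcc s t ⊆ Ioo 0 1 := ordConnected_Ioo.uIcc_subset hs ht
  have hint := (continuousOn_sq_div_alpha_sigma'_pow_sigmaBar_pow hf hg hgpos 1 3).mono hsub
  simp only [pow_one] at hint
  have hFTC := integral_eq_sub_of_hasDerivAt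
    (fun τ hτ => hasDerivAt_sigma'_div_sigmaBar hf hg hgpos (hsub hτ))
    ((hint.const_smul (sigmaSq f g 1 / 2)).intervalIntegrable)
  rw [intervalIntegral.integral_const_mul] at hFTC
  rw [← hFTC]
  field_simp [(sigmaSq_pos hf hg hgpos (right_mem_Ioc.2 one_pos)).ne']

lemma alpha_mul_sigma'_mul_sigmaBar_mul_integral (hf : ContinuousOn f (Icc 0 1))
    (hg : ContinuousOn g (Icc 0 1)) (hgpos : ∀ τ ∈ Icc (0:ℝ) 1, 0 < g τ) {s t : ℝ}
    (hs : s ∈ Ioo (0:ℝ) 1) (ht : t ∈ Ioo (0:ℝ) 1) :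
    alpha f t * sigma' f g t * sigmaBar f g t * ∫ τ in s..t,
        (2 * alpha f 1)⁻¹ * (g τ ^ 2 / (alpha f τ ^ 2 * sigma' f g τ * sigmaBar f g τ ^ 3))
      = alphaBar f t * sigmaSq f g t / sigmaSq f g 1
          * (1 - sigma' f g s * sigmaBar f g t / (sigmaBar f g s * sigma' f g t)) := by
  have := sigma'_pos hf hg hgpos (Ioo_subset_Ioc_self hs)
  have := sigma'_pos hf hg hgpos (Ioo_subset_Ioc_self ht)
  have := sigmaBar_pos hf hg hgpos (Ioo_subset_Ico_self hs)
  have := sigmaBar_pos hf hg hgpos (Ioo_subset_Ico_self ht)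
  have := sigmaSq_pos hf hg hgpos (right_mem_Ioc.2 one_pos)
  have := alpha_pos f 1
  rw [intervalIntegral.integral_const_mul,
    integral_sq_div_alpha_sigma'_sigmaBar_pow_three hf hg hgpos hs ht,
    alphaBar_eq_div hf (Ioo_subset_Icc_self ht), ← sq_sigma' hf hg hgpos (Ioo_subset_Ioc_self ht)]
  field_simp

lemma bridge_drift_eq {E : Type*} [AddCommGroup E] [Module ℝ E] (hf : ContinuousOn f (Icc 0 1))
    (hg : ContinuousOn g (Icc 0 1)) (hgpos : ∀ τ ∈ Icc (0:ℝ) 1, 0 < g τ) {τ : ℝ}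
    (hτ : τ ∈ Ioo (0:ℝ) 1) (y x₁ x : E) :
    f τ • y - (g τ ^ 2 / (2 * alpha f τ ^ 2 * sigmaBarSq f g τ)) • (y - alphaBar f τ • x₁)
        + (g τ ^ 2 / (2 * alpha f τ ^ 2 * sigmaSq f g τ)) • (y - alpha f τ • x)
      = (f τ - g τ ^ 2 / (2 * alpha f τ ^ 2 * sigmaBarSq f g τ)
          + g τ ^ 2 / (2 * alpha f τ ^ 2 * sigmaSq f g τ)) • y
        + (alpha f τ * sigma' f g τ * sigmaBar f g τ) •
          (((2 * alpha f 1)⁻¹ * (g τ ^ 2 / (alpha f τ ^ 2 * sigma' f g τ * sigmaBar f g τ ^ 3)))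
              • x₁
            - (2⁻¹ : ℝ) •
              ((g τ ^ 2 / (alpha f τ ^ 2 * sigma' f g τ ^ 3 * sigmaBar f g τ)) • x)) := by
  have := sigma'_pos hf hg hgpos (Ioo_subset_Ioc_self hτ)
  have := sigmaBar_pos hf hg hgpos (Ioo_subset_Ico_self hτ)
  have := alpha_pos f τ
  have := alpha_pos f 1
  have hx₁ : alpha f τ * sigma' f g τ * sigmaBar f g τ * ((2 * alpha f 1)⁻¹
        * (g τ ^ 2 / (alpha f τ ^ 2 * sigma' f g τ * sigmaBar f g τ ^ 3)))
      = g τ ^ 2 / (2 * alpha f τ ^ 2 * sigmaBarSq f g τ) * alphaBar f τ := by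
    rw [alphaBar_eq_div hf (Ioo_subset_Icc_self hτ), ← sq_sigmaBar hf hg hgpos
      (Ioo_subset_Ico_self hτ)]
    field_simp
  have hx : alpha f τ * sigma' f g τ * sigmaBar f g τ * (2⁻¹
        * (g τ ^ 2 / (alpha f τ ^ 2 * sigma' f g τ ^ 3 * sigmaBar f g τ)))
      = g τ ^ 2 / (2 * alpha f τ ^ 2 * sigmaSq f g τ) * alpha f τ := by
    rw [← sq_sigma' hf hg hgpos (Ioo_subset_Ioc_self hτ)]
    field_simp
  linear_combination (norm := module) -(hx₁ • x₁) + hx • x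

end Schedule

/-- Proposition 2, exact solution of the bridge ODE: if `y` solves the bridge ODE
`y' = f y − g²(y − ᾱ x₁)/(2α²σ̄²) + g²(y − α X)/(2α²σ²)` on `[t,s]` with data-prediction
function `X`, then
`y(t) = (α_t σ_t σ̄_t)/(α_s σ_s σ̄_s) y(s) + (ᾱ_t σ_t²/σ₁²)(1 − σ_s σ̄_t/(σ̄_s σ_t)) x₁
        − (α_t σ_t σ̄_t/2) ∫_s^t g²/(α² σ³ σ̄) X dτ`. -/
theorem bridge_ode_exact_solution
    (f g : ℝ → ℝ)
    (hf : ContinuousOn f (Set.Icc 0 1)) (hg : ContinuousOn g (Set.Icc 0 1))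
    (hgpos : ∀ t ∈ Set.Icc (0:ℝ) 1, 0 < g t)
    (d : ℕ) (x1 : Fin d → ℝ)
    (s t : ℝ) (ht : 0 < t) (hts : t ≤ s) (hs : s < 1)
    (X : ℝ → Fin d → ℝ) (hX : ContinuousOn X (Set.Icc t s))
    (y : ℝ → Fin d → ℝ)
    (hy : ∀ τ ∈ Set.Icc t s,
      HasDerivAt y
        (f τ • y τ
          - ((g τ)^2 / (2 * (alpha f τ)^2 * sigmaBarSq f g τ)) • (y τ - alphaBar f τ • x1)
          + ((g τ)^2 / (2 * (alpha f τ)^2 * sigmaSq f g τ)) • (y τ - alpha f τ • X τ)) τ) :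
    y t = (alpha f t * sigma' f g t * sigmaBar f g t
            / (alpha f s * sigma' f g s * sigmaBar f g s)) • y s
      + (alphaBar f t * sigmaSq f g t / sigmaSq f g 1
          * (1 - sigma' f g s * sigmaBar f g t / (sigmaBar f g s * sigma' f g t))) • x1
      - (alpha f t * sigma' f g t * sigmaBar f g t / 2) •
          (∫ τ in s..t,
            ((g τ)^2 / ((alpha f τ)^2 * (sigma' f g τ)^3 * sigmaBar f g τ)) • X τ) := by
  have hsub : uIcc s t ⊆ Ioo 0 1 := by
    rw [uIcc_of_ge hts]
    exact fun τ hτ => ⟨ht.trans_le hτ.1, hτ.2.trans_lt hs⟩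
  rw [← uIcc_of_ge hts] at hX hy
  have hx1 : IntervalIntegrable (fun τ => ((2 * alpha f 1)⁻¹
      * (g τ ^ 2 / (alpha f τ ^ 2 * sigma' f g τ * sigmaBar f g τ ^ 3))) • x1) volume s t := by
    have hk := (continuousOn_sq_div_alpha_sigma'_pow_sigmaBar_pow hf hg hgpos 1 3).mono hsub
    simp only [pow_one] at hk
    exact ((continuousOn_const.mul hk).smul continuousOn_const).intervalIntegrable
  have hX' : IntervalIntegrable (fun τ => (2⁻¹ : ℝ) • ((g τ ^ 2
      / (alpha f τ ^ 2 * sigma' f g τ ^ 3 * sigmaBar f g τ)) • X τ)) volume s t := by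
    have hw := (continuousOn_sq_div_alpha_sigma'_pow_sigmaBar_pow hf hg hgpos 3 1).mono hsub
    simp only [pow_one] at hw
    exact ((hw.smul hX).const_smul (2⁻¹ : ℝ)).intervalIntegrable
  rw [eq_smul_add_integral_of_hasDerivAt_linear
      (fun τ hτ => hasDerivAt_alpha_mul_sigma'_mul_sigmaBar hf hg hgpos (hsub hτ))
      (fun τ hτ => (alpha_mul_sigma'_mul_sigmaBar_pos hf hg hgpos (hsub hτ)).ne')
      (fun τ hτ => (hy τ hτ).congr_deriv (bridge_drift_eq hf hg hgpos (hsub hτ) _ _ _))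
      (hx1.sub hX'),
    integral_sub hx1 hX', intervalIntegral.integral_smul_const, intervalIntegral.integral_smul,
    smul_sub, smul_smul, alpha_mul_sigma'_mul_sigmaBar_mul_integral hf hg hgpos
      (hsub left_mem_uIcc) (hsub right_mem_uIcc)]
  module
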